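/- Let n, p, T ∈ ℕ and let X₊, X₋ ∈ ℝ^{n×T}, U₋ ∈ ℝ^{p×T} be data matrices. Let N₁₁ ∈ ℝ^{n×n} be symmetric positive definite, N₂₂ ∈ ℝ^{T×T} symmetric negative definite, N₁₂ ∈ ℝ^{n×T}, N₂₁ = N₁₂ᵀ, and let 𝒩 denote the (n+T)×(n+T) block matrix [[N₁₁, N₁₂],[N₂₁, N₂₂]]. Let L ∈ ℝ^{N×N} be symmetric positive definite with smallest eigenvalue λ₁ and largest eigenvalue λ_N; set α = 2/(λ₁+λ_N) and ν = (λ_N-λ₁)/(λ_N+λ₁). Suppose there exist a symmetric positive definite Φ ∈ ℝ^{n×n}, a matrix F ∈ ℝ^{p×n}, and scalars ε ≥ 0, γ > 0, τ > 0 such that the symmetric (4n+2p)×(4n+2p) block matrix M - ε·Z·𝒩·Zᵀ is positive definite, where M has block rows/columns of sizes (n, n, p, n, p, n) given by M = [[Φ-γIₙ,0,0,0,0,0],[0,0,0,Φ,0,0],[0,0,-τν²I_p,F,0,0],[0,Φᵀ,Fᵀ,Φ,Fᵀ,0],[0,0,0,F,τI_p,0],[0,0,0,0,0,Iₙ]],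 and Z ∈ ℝ^{(4n+2p)×(n+T)} has block rows [Iₙ, X₊], [0, -X₋], [0, -U₋], [0,0], [0,0], [0,0]. Then for every pair (A,B) ∈ ℝ^{n×n} × ℝ^{n×p} satisfying [Iₙ, A, B]·W·𝒩·Wᵀ·[Iₙ, A, B]ᵀ ⪰ 0, where W is the block matrix with rows [Iₙ, X₊], [0, -X₋], [0, -U₋], the matrix I_N ⊗ A + α·L ⊗ (B·F·Φ⁻¹) is Schur stable. -/

import Mathlib

/-!
Along vectors `v = (x, Aᵀx, Bᵀx, y, z, 0)` the noise term `ε vᵀZ𝒩Zᵀv` of the LMI equals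
`ε xᵀ[I A B] W𝒩Wᵀ [I A B]ᵀx`, which is nonnegative for every system consistent with the data; so
the quadratic form of `M` alone is positive there (the easy direction of the S-procedure).
Choosing `z = -τ⁻¹Fy` and absorbing the cross term with Young's inequality shows, for
`K = FΦ⁻¹`, that `[[Φ, (A + cBK)Φ], [((A + cBK)Φ)ᵀ, Φ]]` is positive definite whenever
`|c - 1| ≤ ν`, and this Lyapunov certificate forces `A + cBK` to be Schur stable. Finally, `L` is orthogonally
diagonalizable, so `I ⊗ A + αL ⊗ BK` is similar to the block-diagonal matrix with blocks
`A + αλBK`, λ ranging over the eigenvalues of `L`, and `|αλ - 1| ≤ ν` for `λ ∈ [λ₁, λ_N]`.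
-/

open Matrix
open scoped Kronecker

noncomputable section

def SchurStable {m : Type*} [Fintype m] [DecidableEq m] (M : Matrix m m ℂ) : Prop :=
  ∀ μ ∈ spectrum ℂ M, ‖μ‖ < 1

def SchurStableR {m : Type*} [Fintype m] [DecidableEq m] (M : Matrix m m ℝ) : Prop :=
  SchurStable (M.map Complex.ofReal)

open scoped ComplexOrder

namespace Matrix

variable {ι m o : Type*} [Fintype ι] [DecidableEq ι] [Fintype m] [DecidableEq m]
  [Fintype o] [DecidableEq o]

theorem charpoly_blockDiagonal {R : Type*} [CommRing R] (M : o → Matrix m m R) :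
    (blockDiagonal M).charpoly = ∏ k, (M k).charpoly := by
  have : charmatrix (blockDiagonal M) = blockDiagonal fun k => charmatrix (M k) := by
    ext ⟨i, k⟩ ⟨j, k'⟩
    by_cases hk : k = k' <;> by_cases hij : i = j <;> simp [blockDiagonal_apply, hk, hij]
  rw [charpoly, this, det_blockDiagonal]
  rfl

theorem charpoly_one_kronecker_add_diagonal_kronecker {R : Type*} [CommRing R] (d : ι → R)
    (A K : Matrix m m R) :
    (1 ⊗ₖ A + diagonal d ⊗ₖ K).charpoly = ∏ i, (A + d i • K).charpoly := by
  have : 1 ⊗ₖ A + diagonal d ⊗ₖ K = reindex (Equiv.prodComm m ι) (Equiv.prodComm m ι)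
      (blockDiagonal fun i => A + d i • K) := by
    rw [← diagonal_one, diagonal_kronecker, diagonal_kronecker]
    ext
    simp [blockDiagonal_apply, ite_add_ite]
  rw [this, charpoly_reindex, charpoly_blockDiagonal]

theorem IsHermitian.charpoly_one_kronecker_add_kronecker {𝕜 : Type*} [RCLike 𝕜]
    {L : Matrix ι ι 𝕜} (hL : L.IsHermitian) (A K : Matrix m m 𝕜) :
    (1 ⊗ₖ A + L ⊗ₖ K).charpoly = ∏ i, (A + (hL.eigenvalues i : 𝕜) • K).charpoly := by
  set U : Matrix ι ι 𝕜 := ↑hL.eigenvectorUnitary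
  set D : Matrix ι ι 𝕜 := diagonal (RCLike.ofReal ∘ hL.eigenvalues)
  have hUU : star U * U = 1 := Unitary.coe_star_mul_self _
  have hUU' : U * star U = 1 := Unitary.coe_mul_star_self _
  have hLD : L = U * D * star U := hL.spectral_theorem
  have hconj : 1 ⊗ₖ A + L ⊗ₖ K = (U ⊗ₖ 1) * (1 ⊗ₖ A + D ⊗ₖ K) * (star U ⊗ₖ 1) := by
    rw [Matrix.mul_add, Matrix.add_mul, ← mul_kronecker_mul, ← mul_kronecker_mul,
      ← mul_kronecker_mul, ← mul_kronecker_mul, ← hLD, Matrix.mul_one, hUU']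
    simp
  rw [hconj, charpoly_mul_comm, ← Matrix.mul_assoc, ← mul_kronecker_mul, hUU, Matrix.mul_one,
    one_kronecker_one, Matrix.one_mul]
  exact charpoly_one_kronecker_add_diagonal_kronecker _ A K

theorem exists_vecMul_eq_smul_of_mem_spectrum {K : Type*} [Field K] {G : Matrix m m K} {μ : K}
    (hμ : μ ∈ spectrum K G) : ∃ v ≠ 0, v ᵥ* G = μ • v := by
  rw [spectrum.mem_iff, isUnit_iff_isUnit_det, isUnit_iff_ne_zero, not_not,
    ← exists_vecMul_eq_zero_iff] at hμ
  obtain ⟨v, hv, hv0⟩ := hμ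
  refine ⟨v, hv, ?_⟩
  rw [Algebra.algebraMap_eq_smul_one, vecMul_sub, vecMul_smul, vecMul_one, sub_eq_zero] at hv0
  exact hv0.symm

omit [DecidableEq m] in
theorem PosDef.map_ofReal {S : Matrix m m ℝ} (hS : S.PosDef) :
    (S.map ((↑) : ℝ → ℂ)).PosDef := by
  have hH : (S.map ((↑) : ℝ → ℂ)).IsHermitian := by
    rw [IsHermitian, ← conjTranspose_map _ fun x => (Complex.conj_ofReal x).symm, hS.1.eq]
  refine .of_dotProduct_mulVec_pos hH fun w hw =>
    Complex.pos_iff.2 ⟨?_, (hH.im_star_dotProduct_mulVec_self w).symm⟩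
  set a : m → ℝ := fun i => (w i).re
  set b : m → ℝ := fun i => (w i).im
  have hre : (star w ⬝ᵥ (S.map ((↑) : ℝ → ℂ) *ᵥ w)).re = a ⬝ᵥ (S *ᵥ a) + b ⬝ᵥ (S *ᵥ b) := by
    simp only [dotProduct, mulVec, map_apply, Pi.star_apply, Complex.re_sum, Finset.mul_sum,
      ← Finset.sum_add_distrib]
    refine Finset.sum_congr rfl fun i _ => Finset.sum_congr rfl fun j _ => ?_
    simp only [Complex.mul_re, Complex.mul_im, Complex.ofReal_re, Complex.ofReal_im,
      Complex.star_def, Complex.conj_re, Complex.conj_im, a, b]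
    ring
  have ha := hS.posSemidef.dotProduct_mulVec_nonneg a
  have hb := hS.posSemidef.dotProduct_mulVec_nonneg b
  simp only [star_trivial] at ha hb
  rw [hre]
  by_cases ha0 : a = 0
  · have hb0 : b ≠ 0 := fun hb0 =>
      hw (funext fun i => Complex.ext (congrFun ha0 i) (congrFun hb0 i))
    simpa [ha0] using hS.dotProduct_mulVec_pos hb0
  · exact add_pos_of_pos_of_nonneg (by simpa using hS.dotProduct_mulVec_pos ha0) hb

theorem schurStable_of_posDef_fromBlocks {P G : Matrix m m ℂ}
    (h : (fromBlocks P (G * P) (G * P)ᴴ P).PosDef) : SchurStable G := by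
  intro μ hμ
  obtain ⟨v, hv, hvG⟩ := exists_vecMul_eq_smul_of_mem_spectrum hμ
  have hP : P.PosDef := h.submatrix Sum.inl_injective
  have hGv : Gᴴ *ᵥ star v = star μ • star v := by rw [← star_vecMul, hvG, star_smul]
  set c := v ⬝ᵥ (P *ᵥ star v)
  have hc : 0 < c := by simpa using hP.dotProduct_mulVec_pos (star_ne_zero.2 hv)
  set ξ : m ⊕ m → ℂ := Sum.elim (star v) (-star μ • star v)
  have hξ : ξ ≠ 0 := fun h0 => hv (star_eq_zero.1 (funext fun i => congrFun h0 (Sum.inl i)))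
  have hform : star ξ ⬝ᵥ (fromBlocks P (G * P) (G * P)ᴴ P *ᵥ ξ) =
      ((1 - ‖μ‖ ^ 2 : ℝ) : ℂ) * c := by
    simp only [ξ, Function.star_sumElim, fromBlocks_mulVec, sumElim_dotProduct_sumElim,
      Sum.elim_comp_inl, Sum.elim_comp_inr, conjTranspose_mul, hP.1.eq, ← mulVec_mulVec, hGv,
      mulVec_smul, dotProduct_add, dotProduct_smul, smul_dotProduct, star_smul, star_neg,
      star_star]
    rw [dotProduct_mulVec v G, hvG]
    simp only [smul_dotProduct, smul_eq_mul, Complex.ofReal_sub,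
      Complex.ofReal_one, Complex.ofReal_pow, ← Complex.mul_conj', Complex.star_def]
    ring
  have key := (Complex.pos_iff.1 (hform ▸ h.dotProduct_mulVec_pos hξ)).1
  rw [Complex.re_ofReal_mul] at key
  have : 0 < 1 - ‖μ‖ ^ 2 := (pos_iff_pos_of_mul_pos key).2 (Complex.pos_iff.1 hc).1
  exact (sq_lt_one_iff₀ (norm_nonneg μ)).1 (by linarith)

end Matrix

section Stability

variable {ι m : Type*} [Fintype ι] [DecidableEq ι] [Fintype m] [DecidableEq m]

theorem schurStableR_of_posDef_fromBlocks {Φ G : Matrix m m ℝ}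
    (h : (fromBlocks Φ (G * Φ) (G * Φ)ᵀ Φ).PosDef) : SchurStableR G := by
  apply schurStable_of_posDef_fromBlocks (P := Φ.map (↑))
  have hmul : (G * Φ).map ((↑) : ℝ → ℂ) = G.map (↑) * Φ.map (↑) :=
    Matrix.map_mul (f := Complex.ofRealHom)
  rw [← hmul, ← conjTranspose_map _ fun x => (Complex.conj_ofReal x).symm,
    conjTranspose_eq_transpose_of_trivial, ← fromBlocks_map]
  exact h.map_ofReal

theorem schurStableR_one_kronecker_add_kronecker {L : Matrix ι ι ℝ} (hL : L.IsHermitian)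
    {A K : Matrix m m ℝ} (h : ∀ l ∈ spectrum ℝ L, SchurStableR (A + l • K)) :
    SchurStableR (1 ⊗ₖ A + L ⊗ₖ K) := by
  intro μ hμ
  have hroot : ((1 ⊗ₖ A + L ⊗ₖ K).charpoly.map Complex.ofRealHom).IsRoot μ := by
    rw [← charpoly_map]
    exact mem_spectrum_iff_isRoot_charpoly.1 hμ
  rw [hL.charpoly_one_kronecker_add_kronecker, Polynomial.map_prod, Polynomial.IsRoot,
    Polynomial.eval_prod, Finset.prod_eq_zero_iff] at hroot
  obtain ⟨i, -, hi⟩ := hroot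
  refine h _ (hL.eigenvalues_mem_spectrum_real i) μ (mem_spectrum_iff_isRoot_charpoly.2 ?_)
  show ((A + hL.eigenvalues i • K).map Complex.ofRealHom).charpoly.IsRoot μ
  rw [charpoly_map]
  simpa using hi

end Stability

section SProcedure

theorem dotProduct_mulVec_pos_of_posDef_sub_smul {k t : Type*} [Fintype k] [Fintype t]
    {M : Matrix k k ℝ} {Z : Matrix k t ℝ} {N : Matrix t t ℝ} {ε : ℝ} (hε : 0 ≤ ε)
    (h : (M - ε • (Z * N * Zᵀ)).PosDef) {v : k → ℝ} (hv : v ≠ 0)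
    (hN : 0 ≤ (v ᵥ* Z) ⬝ᵥ (N *ᵥ (v ᵥ* Z))) : 0 < v ⬝ᵥ (M *ᵥ v) := by
  have := h.dotProduct_mulVec_pos hv
  rw [star_trivial, sub_mulVec, dotProduct_sub, smul_mulVec, dotProduct_smul, smul_eq_mul,
    ← mulVec_mulVec, ← mulVec_mulVec, dotProduct_mulVec v Z, mulVec_transpose] at this
  linarith [mul_nonneg hε hN]

theorem neg_two_mul_dotProduct_le {m : Type*} [Fintype m] (a b : m → ℝ) {δ ν τ : ℝ}
    (hτ : 0 < τ) (hδ : |δ| ≤ ν) :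
    -(2 * δ * (a ⬝ᵥ b)) ≤ τ * ν ^ 2 * (a ⬝ᵥ a) + τ⁻¹ * (b ⬝ᵥ b) := by
  have hsq : 0 ≤ ((τ * δ) • a + b) ⬝ᵥ ((τ * δ) • a + b) :=
    Finset.sum_nonneg fun i _ => mul_self_nonneg _
  simp only [add_dotProduct, dotProduct_add, smul_dotProduct, dotProduct_smul, smul_eq_mul,
    dotProduct_comm b a] at hsq
  have hδν : δ ^ 2 ≤ ν ^ 2 := sq_le_sq.2 (hδ.trans (le_abs_self ν))
  have haa : 0 ≤ a ⬝ᵥ a := Finset.sum_nonneg fun i _ => mul_self_nonneg _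
  rw [← mul_le_mul_iff_right₀ hτ]
  field_simp
  nlinarith [mul_le_mul_of_nonneg_right hδν (mul_nonneg (mul_self_nonneg τ) haa)]

variable {n p t : Type*} [Fintype n] [DecidableEq n] [Fintype p] [DecidableEq p] [Fintype t]

/-- `M` in the LMI. -/
def lmiMatrix (Φ : Matrix n n ℝ) (F : Matrix p n ℝ) (γ τ ν : ℝ) :
    Matrix ((n ⊕ n) ⊕ ((p ⊕ n) ⊕ (p ⊕ n))) ((n ⊕ n) ⊕ ((p ⊕ n) ⊕ (p ⊕ n))) ℝ :=
  fromBlocks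
    (fromBlocks (Φ - γ • 1) 0 0 0)
    (fromCols (fromBlocks 0 0 0 Φ) 0)
    (fromRows (fromBlocks 0 0 0 Φᵀ) 0)
    (fromBlocks
      (fromBlocks ((-(τ * ν ^ 2)) • 1) F Fᵀ Φ)
      (fromBlocks 0 0 Fᵀ 0)
      (fromBlocks 0 F 0 0)
      (fromBlocks (τ • 1) 0 0 1))

/-- `Z` in the LMI: the rows of `dataMatrix` padded with zeros. -/
def liftedDataMatrix (Xplus Xminus : Matrix n t ℝ) (Uminus : Matrix p t ℝ) :
    Matrix ((n ⊕ n) ⊕ ((p ⊕ n) ⊕ (p ⊕ n))) (n ⊕ t) ℝ :=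
  fromRows (fromBlocks 1 Xplus 0 (-Xminus)) (fromRows (fromBlocks 0 (-Uminus) 0 0) 0)

/-- `W` in the noise bound `[I A B] W 𝒩 Wᵀ [I A B]ᵀ ⪰ 0`. -/
def dataMatrix (Xplus Xminus : Matrix n t ℝ) (Uminus : Matrix p t ℝ) :
    Matrix (n ⊕ (n ⊕ p)) (n ⊕ t) ℝ :=
  fromBlocks 1 Xplus 0 (fromRows (-Xminus) (-Uminus))

theorem dotProduct_mulVec_lmiMatrix (Φ : Matrix n n ℝ) (F : Matrix p n ℝ) (γ τ ν : ℝ)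
    (x u y r : n → ℝ) (s z : p → ℝ) :
    Sum.elim (Sum.elim x u) (Sum.elim (Sum.elim s y) (Sum.elim z r)) ⬝ᵥ
        (lmiMatrix Φ F γ τ ν *ᵥ Sum.elim (Sum.elim x u) (Sum.elim (Sum.elim s y) (Sum.elim z r))) =
      x ⬝ᵥ (Φ *ᵥ x) - γ * (x ⬝ᵥ x) + 2 * (u ⬝ᵥ (Φ *ᵥ y)) - τ * ν ^ 2 * (s ⬝ᵥ s)
        + 2 * (s ⬝ᵥ (F *ᵥ y)) + y ⬝ᵥ (Φ *ᵥ y) + 2 * (z ⬝ᵥ (F *ᵥ y)) + τ * (z ⬝ᵥ z)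
        + r ⬝ᵥ r := by
  simp only [lmiMatrix, fromBlocks_mulVec, fromRows_mulVec, fromCols_mulVec_sumElim,
    zero_mulVec, add_zero, zero_add, sub_mulVec, smul_mulVec, one_mulVec,
    sumElim_dotProduct_sumElim, dotProduct_add, dotProduct_sub, dotProduct_smul,
    smul_eq_mul, dotProduct_zero, Sum.elim_comp_inl, Sum.elim_comp_inr, dotProduct_mulVec _ Φᵀ,
    dotProduct_mulVec _ Fᵀ, vecMul_transpose, dotProduct_comm (Φ *ᵥ y), dotProduct_comm (F *ᵥ y)]
  ring

omit [DecidableEq p] [Fintype t] in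
theorem vecMul_liftedDataMatrix (Xplus Xminus : Matrix n t ℝ) (Uminus : Matrix p t ℝ)
    (A : Matrix n n ℝ) (B : Matrix n p ℝ) (x y : n → ℝ) (w : p ⊕ n → ℝ) :
    Sum.elim (Sum.elim x (x ᵥ* A)) (Sum.elim (Sum.elim (x ᵥ* B) y) w) ᵥ*
        liftedDataMatrix Xplus Xminus Uminus =
      x ᵥ* (fromCols (1 : Matrix n n ℝ) (fromCols A B) * dataMatrix Xplus Xminus Uminus) := by
  rw [← vecMul_vecMul, vecMul_fromCols, vecMul_fromCols, vecMul_one]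
  simp only [liftedDataMatrix, dataMatrix, sumElim_vecMul_fromRows, vecMul_fromBlocks,
    Sum.elim_comp_inl, Sum.elim_comp_inr, vecMul_zero, vecMul_one, add_zero]
  ext (i | i) <;> simp [add_assoc]

theorem posDef_fromBlocks_of_lmi {Xplus Xminus : Matrix n t ℝ} {Uminus : Matrix p t ℝ}
    {N : Matrix (n ⊕ t) (n ⊕ t) ℝ} {Φ : Matrix n n ℝ} {F : Matrix p n ℝ} {ε γ τ ν : ℝ}
    (hΦ : Φ.IsSymm) (hε : 0 ≤ ε) (hγ : 0 ≤ γ) (hτ : 0 < τ)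
    (hLMI : (lmiMatrix Φ F γ τ ν - ε • (liftedDataMatrix Xplus Xminus Uminus * N *
      (liftedDataMatrix Xplus Xminus Uminus)ᵀ)).PosDef)
    {A : Matrix n n ℝ} {B : Matrix n p ℝ}
    (hcons : (fromCols (1 : Matrix n n ℝ) (fromCols A B) * dataMatrix Xplus Xminus Uminus * N *
      (dataMatrix Xplus Xminus Uminus)ᵀ * (fromCols (1 : Matrix n n ℝ) (fromCols A B))ᵀ).PosSemidef)
    {c : ℝ} (hc : |c - 1| ≤ ν) :
    (fromBlocks Φ (A * Φ + c • (B * F)) (A * Φ + c • (B * F))ᵀ Φ).PosDef := by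
  refine posDef_iff_dotProduct_mulVec.2 ⟨?_, fun v hv => ?_⟩
  · rw [IsHermitian, conjTranspose_eq_transpose_of_trivial, fromBlocks_transpose,
      transpose_transpose, hΦ.eq]
  obtain ⟨x, y, rfl⟩ : ∃ x y, v = Sum.elim x y := ⟨_, _, (Sum.elim_comp_inl_inr v).symm⟩
  set w := Sum.elim (Sum.elim x (x ᵥ* A))
    (Sum.elim (Sum.elim (x ᵥ* B) y) (Sum.elim (-τ⁻¹ • (F *ᵥ y)) 0))
  have hw : w ≠ 0 := by
    intro h0
    apply hv
    ext (i | i)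
    · exact congrFun h0 (Sum.inl (Sum.inl i))
    · exact congrFun h0 (Sum.inr (Sum.inl (Sum.inr i)))
  have hnoise : 0 ≤ (w ᵥ* liftedDataMatrix Xplus Xminus Uminus) ⬝ᵥ
      (N *ᵥ (w ᵥ* liftedDataMatrix Xplus Xminus Uminus)) := by
    have := hcons.dotProduct_mulVec_nonneg x
    rwa [star_trivial, Matrix.mul_assoc, ← transpose_mul, ← mulVec_mulVec, ← mulVec_mulVec,
      dotProduct_mulVec, mulVec_transpose, ← vecMul_liftedDataMatrix _ _ _ _ _ x y] at this
  have hpos := dotProduct_mulVec_pos_of_posDef_sub_smul hε hLMI hw hnoise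
  have hτinv : τ * (-τ⁻¹ * -τ⁻¹) = τ⁻¹ := by field_simp
  rw [dotProduct_mulVec_lmiMatrix] at hpos
  simp only [smul_dotProduct, dotProduct_smul, smul_eq_mul, dotProduct_zero, add_zero,
    ← mul_assoc, hτinv] at hpos
  rw [star_trivial, fromBlocks_mulVec, sumElim_dotProduct_sumElim, Sum.elim_comp_inl,
    Sum.elim_comp_inr, dotProduct_add, dotProduct_add, dotProduct_mulVec y, vecMul_transpose,
    dotProduct_comm _ x, add_mulVec, smul_mulVec, dotProduct_add, dotProduct_smul, smul_eq_mul,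
    ← mulVec_mulVec, ← mulVec_mulVec, dotProduct_mulVec x A, dotProduct_mulVec x B]
  have hxx : 0 ≤ x ⬝ᵥ x := Finset.sum_nonneg fun i _ => mul_self_nonneg _
  linarith [neg_two_mul_dotProduct_le (x ᵥ* B) (F *ᵥ y) hτ hc, mul_nonneg hγ hxx]

end SProcedure

theorem abs_two_div_add_mul_sub_one_le {a b l : ℝ} (ha : 0 < a) (hal : a ≤ l) (hlb : l ≤ b) :
    |2 / (a + b) * l - 1| ≤ (b - a) / (b + a) := by
  have hab : 0 < a + b := by linarith
  rw [show 2 / (a + b) * l - 1 = (2 * l - (a + b)) / (a + b) by field_simp, add_comm b a,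
    abs_div, abs_of_pos hab]
  gcongr
  exact abs_le.2 ⟨by linarith, by linarith⟩

theorem noisy_data_informative_for_consensus_general {n p T N : ℕ}
    (Xplus Xminus : Matrix (Fin n) (Fin T) ℝ) (Uminus : Matrix (Fin p) (Fin T) ℝ)
    (𝒩 : Matrix (Fin n ⊕ Fin T) (Fin n ⊕ Fin T) ℝ)
    (L : Matrix (Fin N) (Fin N) ℝ) (hLpd : L.PosDef)
    (lam1 lamN : ℝ)
    (hlam1mem : lam1 ∈ spectrum ℝ L)
    (hbounds : ∀ μ ∈ spectrum ℝ L, lam1 ≤ μ ∧ μ ≤ lamN)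
    (α ν : ℝ) (hα : α = 2 / (lam1 + lamN)) (hν : ν = (lamN - lam1) / (lamN + lam1))
    (Φ : Matrix (Fin n) (Fin n) ℝ) (hΦ : Φ.PosDef)
    (F : Matrix (Fin p) (Fin n) ℝ)
    (ε γ τ : ℝ) (hε : 0 ≤ ε) (hγ : 0 < γ) (hτ : 0 < τ)
    (M : Matrix ((Fin n ⊕ Fin n) ⊕ ((Fin p ⊕ Fin n) ⊕ (Fin p ⊕ Fin n)))
        ((Fin n ⊕ Fin n) ⊕ ((Fin p ⊕ Fin n) ⊕ (Fin p ⊕ Fin n))) ℝ)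
    (hM : M = Matrix.fromBlocks
      (Matrix.fromBlocks (Φ - γ • 1) 0 0 0)
      (Matrix.fromCols (Matrix.fromBlocks 0 0 0 Φ) 0)
      (Matrix.fromRows (Matrix.fromBlocks 0 0 0 Φᵀ) 0)
      (Matrix.fromBlocks
        (Matrix.fromBlocks ((-(τ * ν ^ 2)) • 1) F Fᵀ Φ)
        (Matrix.fromBlocks 0 0 Fᵀ 0)
        (Matrix.fromBlocks 0 F 0 0)
        (Matrix.fromBlocks (τ • 1) 0 0 1)))
    (Z : Matrix ((Fin n ⊕ Fin n) ⊕ ((Fin p ⊕ Fin n) ⊕ (Fin p ⊕ Fin n))) (Fin n ⊕ Fin T) ℝ)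
    (hZ : Z = Matrix.fromRows
      (Matrix.fromBlocks 1 Xplus 0 (-Xminus))
      (Matrix.fromRows (Matrix.fromBlocks 0 (-Uminus) 0 0) 0))
    (hLMI : (M - ε • (Z * 𝒩 * Zᵀ)).PosDef)
    (W : Matrix (Fin n ⊕ (Fin n ⊕ Fin p)) (Fin n ⊕ Fin T) ℝ)
    (hW : W = Matrix.fromBlocks 1 Xplus 0 (Matrix.fromRows (-Xminus) (-Uminus))) :
    ∀ (A : Matrix (Fin n) (Fin n) ℝ) (B : Matrix (Fin n) (Fin p) ℝ),
      (Matrix.fromCols (1 : Matrix (Fin n) (Fin n) ℝ) (Matrix.fromCols A B) * W * 𝒩 *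
          Wᵀ * (Matrix.fromCols (1 : Matrix (Fin n) (Fin n) ℝ)
            (Matrix.fromCols A B))ᵀ).PosSemidef →
      SchurStableR ((1 : Matrix (Fin N) (Fin N) ℝ) ⊗ₖ A + (α • L) ⊗ₖ (B * F * Φ⁻¹)) := by
  intro A B hcons
  subst hM hZ hW hα hν
  have hlam1 : 0 < lam1 := by
    obtain ⟨i, rfl⟩ := hLpd.1.spectrum_real_eq_range_eigenvalues ▸ hlam1mem
    exact hLpd.eigenvalues_pos i
  rw [smul_kronecker, ← kronecker_smul]
  refine schurStableR_one_kronecker_add_kronecker hLpd.1 fun l hl => ?_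
  apply schurStableR_of_posDef_fromBlocks (Φ := Φ)
  rw [smul_smul, mul_comm l, add_mul, smul_mul,
    nonsing_inv_mul_cancel_right _ _ ((isUnit_iff_isUnit_det Φ).1 hΦ.isUnit)]
  exact posDef_fromBlocks_of_lmi hΦ.1 hε hγ.le hτ hLMI hcons
    (abs_two_div_add_mul_sub_one_le hlam1 (hbounds l hl).1 (hbounds l hl).2)

/-- Theorem 4 of the paper: feasibility of the data-dependent LMI obtained
via the S-procedure certifies that the noisy data `(X, U₋)` are informative for consensus:
the gain `K = FΦ⁻¹` renders `I_N ⊗ A + αL ⊗ BK` Schur stable for every system `(A, B)`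
consistent with the data under the noise bound.  The 6×6 block matrix `M` (block sizes
`n, n, p, n, p, n`) is encoded by nested `fromBlocks`, with block index type
`(Fin n ⊕ Fin n) ⊕ ((Fin p ⊕ Fin n) ⊕ (Fin p ⊕ Fin n))`. -/
theorem noisy_data_informative_for_consensus {n p T N : ℕ}
    (Xplus Xminus : Matrix (Fin n) (Fin T) ℝ) (Uminus : Matrix (Fin p) (Fin T) ℝ)
    (N11 : Matrix (Fin n) (Fin n) ℝ) (hN11 : N11.PosDef)
    (N22 : Matrix (Fin T) (Fin T) ℝ) (hN22 : (-N22).PosDef) (hN22symm : N22.IsSymm)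
    (N12 : Matrix (Fin n) (Fin T) ℝ)
    (𝒩 : Matrix (Fin n ⊕ Fin T) (Fin n ⊕ Fin T) ℝ)
    (h𝒩 : 𝒩 = Matrix.fromBlocks N11 N12 N12ᵀ N22)
    (L : Matrix (Fin N) (Fin N) ℝ) (hLsymm : L.IsSymm) (hLpd : L.PosDef)
    (lam1 lamN : ℝ)
    (hlam1mem : lam1 ∈ spectrum ℝ L) (hlamNmem : lamN ∈ spectrum ℝ L)
    (hbounds : ∀ μ ∈ spectrum ℝ L, lam1 ≤ μ ∧ μ ≤ lamN)
    (α ν : ℝ) (hα : α = 2 / (lam1 + lamN)) (hν : ν = (lamN - lam1) / (lamN + lam1))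
    (Φ : Matrix (Fin n) (Fin n) ℝ) (hΦ : Φ.PosDef)
    (F : Matrix (Fin p) (Fin n) ℝ)
    (ε γ τ : ℝ) (hε : 0 ≤ ε) (hγ : 0 < γ) (hτ : 0 < τ)
    (M : Matrix ((Fin n ⊕ Fin n) ⊕ ((Fin p ⊕ Fin n) ⊕ (Fin p ⊕ Fin n)))
        ((Fin n ⊕ Fin n) ⊕ ((Fin p ⊕ Fin n) ⊕ (Fin p ⊕ Fin n))) ℝ)
    (hM : M = Matrix.fromBlocks
      (Matrix.fromBlocks (Φ - γ • 1) 0 0 0)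
      (Matrix.fromCols (Matrix.fromBlocks 0 0 0 Φ) 0)
      (Matrix.fromRows (Matrix.fromBlocks 0 0 0 Φᵀ) 0)
      (Matrix.fromBlocks
        (Matrix.fromBlocks ((-(τ * ν ^ 2)) • 1) F Fᵀ Φ)
        (Matrix.fromBlocks 0 0 Fᵀ 0)
        (Matrix.fromBlocks 0 F 0 0)
        (Matrix.fromBlocks (τ • 1) 0 0 1)))
    (Z : Matrix ((Fin n ⊕ Fin n) ⊕ ((Fin p ⊕ Fin n) ⊕ (Fin p ⊕ Fin n))) (Fin n ⊕ Fin T) ℝ)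
    (hZ : Z = Matrix.fromRows
      (Matrix.fromBlocks 1 Xplus 0 (-Xminus))
      (Matrix.fromRows (Matrix.fromBlocks 0 (-Uminus) 0 0) 0))
    (hLMI : (M - ε • (Z * 𝒩 * Zᵀ)).PosDef)
    (W : Matrix (Fin n ⊕ (Fin n ⊕ Fin p)) (Fin n ⊕ Fin T) ℝ)
    (hW : W = Matrix.fromBlocks 1 Xplus 0 (Matrix.fromRows (-Xminus) (-Uminus))) :
    ∀ (A : Matrix (Fin n) (Fin n) ℝ) (B : Matrix (Fin n) (Fin p) ℝ),
      (Matrix.fromCols (1 : Matrix (Fin n) (Fin n) ℝ) (Matrix.fromCols A B) * W * 𝒩 *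
          Wᵀ * (Matrix.fromCols (1 : Matrix (Fin n) (Fin n) ℝ)
            (Matrix.fromCols A B))ᵀ).PosSemidef →
      SchurStableR ((1 : Matrix (Fin N) (Fin N) ℝ) ⊗ₖ A + (α • L) ⊗ₖ (B * F * Φ⁻¹)) :=
  noisy_data_informative_for_consensus_general Xplus Xminus Uminus 𝒩 L hLpd lam1 lamN hlam1mem
    hbounds α ν hα hν Φ hΦ F ε γ τ hε hγ hτ M hM Z hZ hLMI W hW
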